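/- Visitable paths of a sum: for a nonempty family (A_k)_{k∈K} of pairwise disjoint positive behaviours, the visitable paths of ⊕_{k∈K} A_k are exactly the disjoint union of the visitable paths of the A_k; i.e. V_{⊕_k A_k} = ⨄_k V_{A_k}. -/

import Mathlib

namespace Ludics

abbrev Address := List ℕ

/-- An action of Ludics: the daimon, or a proper action given by a polarity
(`true` = positive), a focus address and a ramification. -/
inductive Action where
  | daimon : Action
  | proper (pos : Bool) (focus : Address) (ram : Finset ℕ) : Action
deriving DecidableEq

namespace Action

def isPositive : Action → Bool
  | daimon => true
  | proper pos _ _ => pos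

def focus? : Action → Option Address
  | daimon => none
  | proper _ ξ _ => some ξ

/-- Reverse the polarity of an action. -/
def dual : Action → Action
  | daimon => daimon
  | proper pos ξ I => proper (!pos) ξ I

/-- `a.justifiesB b` : the focus of `b` is one of the addresses created by `a`. -/
def justifiesB : Action → Action → Bool
  | proper _ ξ I, proper _ ζ _ => decide (∃ i ∈ I, ζ = ξ ++ [i])
  | _, _ => false

def justifies (a b : Action) : Prop := a.justifiesB b = true

end Action

/-- A sequent of a base: an optional left address (at most one) and a finite
set of right addresses. -/
structure Sequent where
  left : Option Address
  right : Finset Address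

abbrev Base := List Sequent

def Base.isPositive (β : Base) : Prop := ∃ σ ∈ β, σ.left = none

/-- An action is initial w.r.t. a base if its focus belongs to the base
(on the side corresponding to its polarity). -/
def Initial (β : Base) (a : Action) : Prop :=
  ∃ pol ξ I, a = .proper pol ξ I ∧
    ∃ σ ∈ β, (pol = true ∧ ξ ∈ σ.right) ∨ (pol = false ∧ σ.left = some ξ)

/-- A sequent "owns" an action when its focus is hereditarily justified by an
address of the sequent (i.e. extends an address of the sequent). -/
def Sequent.owns (σ : Sequent) (a : Action) : Prop :=
  ∃ ξ, a.focus? = some ξ ∧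
    ((∃ γ, σ.left = some γ ∧ γ <+: ξ) ∨ (∃ δ ∈ σ.right, δ <+: ξ))

def Sequent.addresses (σ : Sequent) : Set Address :=
  (match σ.left with | some γ => {γ} | none => ∅) ∪ ↑σ.right

def Base.addresses (β : Base) : Set Address :=
  {a | ∃ σ ∈ β, a ∈ σ.addresses}

/-- The dual base: each sequent `Γ ⊢ Δ` gives sequents `⊢ Γ` and `δ ⊢` for δ ∈ Δ. -/
noncomputable def Sequent.dualSequents (σ : Sequent) : List Sequent :=
  (match σ.left with
    | some γ => [⟨none, ({γ} : Finset Address)⟩]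
    | none => []) ++
    σ.right.toList.map fun δ => ⟨some δ, (∅ : Finset Address)⟩

noncomputable def Base.dual (β : Base) : Base := (β.map Sequent.dualSequents).flatten

/-- View of a sequence, computed on the reversed sequence (most recent action
first), with fuel. -/
def viewRevAux : ℕ → List Action → List Action
  | 0, _ => []
  | _ + 1, [] => []
  | n + 1, a :: w =>
    if a.isPositive then a :: viewRevAux n w
    else a :: viewRevAux n (w.dropWhile fun b => !(b.justifiesB a))

def viewRev (s : List Action) : List Action := viewRevAux s.length s

/-- The view `⌜s⌝` of a sequence of actions. -/
def view (s : List Action) : List Action := (viewRev s.reverse).reverse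

/-- `p` is a path based on `β`. -/
structure IsPath (β : Base) (p : List Action) : Prop where
  alternating : p.Chain' fun a b => a.isPositive ≠ b.isPositive
  justified : ∀ w a, w ++ [a] <+: p → a ≠ Action.daimon →
    Initial β a ∨ ∃ b ∈ w, b.justifies a
  negJump : ∀ w a b, w ++ [a] <+: p → a.isPositive = true → b ∈ w →
    b.justifies a → b ∈ view w
  posJump : ∀ w a, w ++ [a] <+: p → a.isPositive = true → a ≠ Action.daimon →
    ∀ σ ∈ β, (∃ f, a.focus? = some f ∧ f ∈ σ.right) →
      (w = [] ∧ σ.left = none) ∨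
      ∃ w' b, w = w' ++ [b] ∧ b.isPositive = false ∧ σ.owns b
  linearity : (p.filterMap Action.focus?).Nodup
  daimonLast : ∀ w, w ++ [Action.daimon] <+: p → w ++ [Action.daimon] = p
  daimonFirst : p.head? = some Action.daimon → β.isPositive
  totality : β.isPositive → ∃ a t, p = a :: t ∧
    (a = Action.daimon ∨ (a.isPositive = true ∧ Initial β a))

/-- A chronicle: a non-empty path where each non-initial negative action is
justified by the immediately preceding action. -/
def IsChronicle (β : Base) (c : List Action) : Prop :=
  IsPath β c ∧ c ≠ [] ∧
    ∀ w a b, w ++ [a, b] <+: c → b.isPositive = false →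
      Initial β b ∨ a.justifies b

/-- The dual of a positive-ended sequence: reverse all polarities, removing a
final daimon if present and appending one otherwise. -/
def dualSeq (p : List Action) : List Action :=
  if p.getLast? = some Action.daimon then p.dropLast.map Action.dual
  else p.map Action.dual ++ [Action.daimon]

/-- Positive-ended (possibly empty) sequence. -/
def PosEnded (p : List Action) : Prop :=
  p = [] ∨ ∃ a, p.getLast? = some a ∧ a.isPositive = true

/-- A (non-empty) negative-starting, positive-ended block. -/
def NegBlock (b : List Action) : Prop :=
  b ≠ [] ∧ (∀ a, b.head? = some a → a.isPositive = false) ∧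
    ∀ a, b.getLast? = some a → a.isPositive = true

def EndsWithDaimon (p : List Action) : Prop := p.getLast? = some Action.daimon

/-- Basic shuffle of two positive-ended negative paths: interleaving by
positive-ended negative blocks; if the last `p`-block ends with the daimon
then the last `q`-block is empty. -/
def ShuffleNeg (p q r : List Action) : Prop :=
  ∃ ps qs : List (List Action),
    ps.length = qs.length ∧
    (∀ b ∈ ps, b = [] ∨ NegBlock b) ∧
    (∀ b ∈ qs, b = [] ∨ NegBlock b) ∧
    ps.flatten = p ∧ qs.flatten = q ∧
    (List.zipWith (· ++ ·) ps qs).flatten = r ∧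
    (EndsWithDaimon (ps.getLast?.getD []) → qs.getLast?.getD [] = [])

/-- The shuffle `r ∈ p ⧢ q`, including the extensions to two daimon-ended
paths and to paths with a common positive-ended prefix. -/
inductive Shuffle : List Action → List Action → List Action → Prop where
  | base {p q r} : ShuffleNeg p q r → Shuffle p q r
  | daiLeft {p q r} {κ₁ κ₂ : Action} :
      Shuffle (p ++ [κ₁, Action.daimon]) q r →
      Shuffle (p ++ [κ₁, Action.daimon]) (q ++ [κ₂, Action.daimon]) r
  | daiRight {p q r} {κ₁ κ₂ : Action} :
      Shuffle p (q ++ [κ₂, Action.daimon]) r →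
      Shuffle (p ++ [κ₁, Action.daimon]) (q ++ [κ₂, Action.daimon]) r
  | pre {s p q r} : s ≠ [] → PosEnded s → Shuffle p q r →
      Shuffle (s ++ p) (s ++ q) (s ++ r)

/-- Shuffle closure of a set of (positive-ended) paths. -/
inductive ShuffleClosure (P : Set (List Action)) : List Action → Prop where
  | mem {p} : p ∈ P → ShuffleClosure P p
  | shuffle {p q r} : ShuffleClosure P p → ShuffleClosure P q →
      Shuffle p q r → ShuffleClosure P r

/-- Coherence of chronicles: comparability and propagation. -/
def Coherent (c₁ c₂ : List Action) : Prop :=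
  (∀ w κ₁ κ₂, w ++ [κ₁] <+: c₁ → w ++ [κ₂] <+: c₂ →
      κ₁ = κ₂ ∨ (κ₁.isPositive = false ∧ κ₂.isPositive = false)) ∧
  (∀ w ξ₁ I₁ w₁ σ₁ ξ₂ I₂ w₂ σ₂,
      w ++ Action.proper false ξ₁ I₁ :: w₁ ++ [σ₁] <+: c₁ →
      w ++ Action.proper false ξ₂ I₂ :: w₂ ++ [σ₂] <+: c₂ →
      ξ₁ ≠ ξ₂ → ∀ f, σ₁.focus? = some f → σ₂.focus? ≠ some f)

/-- A design, as a prefix-closed clique of chronicles. -/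
structure IsDesign (β : Base) (D : Set (List Action)) : Prop where
  chron : ∀ c ∈ D, IsChronicle β c
  prefixClosed : ∀ c ∈ D, ∀ d, d <+: c → d ≠ [] → d ∈ D
  coherent : ∀ c ∈ D, ∀ d ∈ D, Coherent c d
  maxPos : ∀ c ∈ D, (∀ κ, c ++ [κ] ∉ D) →
    ∃ a, c.getLast? = some a ∧ a.isPositive = true
  posNonempty : β.isPositive → D.Nonempty

/-- A net of designs, abusively seen as its set of chronicles. -/
structure IsNet (β : Base) (R : Set (List Action)) : Prop where
  chron : ∀ c ∈ R, IsChronicle β c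
  prefixClosed : ∀ c ∈ R, ∀ d, d <+: c → d ≠ [] → d ∈ R

/-- `p` is a path of the design/net `D`: each view of each non-empty prefix of
`p` is a chronicle of `D`. -/
def PathOf (β : Base) (D : Set (List Action)) (p : List Action) : Prop :=
  IsPath β p ∧ ∀ q, q <+: p → q ≠ [] → view q ∈ D

/-- Whose turn it is in normalization: `dpos` says whether the design `D` owns
the first (positive) move; afterwards `D` moves exactly after negative actions. -/
def TurnD (dpos : Prop) (s : List Action) : Prop :=
  match s.getLast? with
  | none => dpos
  | some a => a.isPositive = false

/-- Interaction (normalization) between a design `D` and a counter-net `R`,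
described by its visited sequence `s` (seen from `D`): it converges from
state `s` if the design to move plays the daimon, or it plays a proper
positive action accepted (in dual form) by the other one, and the interaction
converges from the extended state. -/
inductive Conv (D R : Set (List Action)) (dpos : Prop) : List Action → Prop where
  | daiD {s} : TurnD dpos s → view (s ++ [Action.daimon]) ∈ D → Conv D R dpos s
  | daiR {s} : ¬ TurnD dpos s →
      view (s.map Action.dual ++ [Action.daimon]) ∈ R → Conv D R dpos s
  | stepD {s κ} : TurnD dpos s → κ.isPositive = true → κ ≠ Action.daimon →
      view (s ++ [κ]) ∈ D → view ((s ++ [κ]).map Action.dual) ∈ R →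
      Conv D R dpos (s ++ [κ]) → Conv D R dpos s
  | stepR {s κ} : ¬ TurnD dpos s → κ.isPositive = false →
      view ((s ++ [κ]).map Action.dual) ∈ R → view (s ++ [κ]) ∈ D →
      Conv D R dpos (s ++ [κ]) → Conv D R dpos s

/-- The simple base `⊢ ξ` (positive) or `ξ ⊢` (negative). -/
def simpleBase (ξ : Address) (pos : Bool) : Base :=
  if pos then [⟨none, {ξ}⟩] else [⟨some ξ, ∅⟩]

/-- The orthogonal of a set of designs on a simple base. -/
def orthSet (ξ : Address) (pos : Bool) (A : Set (Set (List Action))) :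
    Set (Set (List Action)) :=
  {E | IsDesign (simpleBase ξ !pos) E ∧
    ∀ D ∈ A, if pos then Conv D E True [] else Conv E D True []}

def biorth (ξ : Address) (pos : Bool) (A : Set (Set (List Action))) :
    Set (Set (List Action)) :=
  orthSet ξ (!pos) (orthSet ξ pos A)

/-- A behaviour: a bi-orthogonally closed set of designs on a simple base. -/
structure Behaviour (ξ : Address) (pos : Bool) where
  designs : Set (Set (List Action))
  isDesign : ∀ D ∈ designs, IsDesign (simpleBase ξ pos) D
  closed : designs = biorth ξ pos designs

/-- Visitable paths of a set of designs: traces of convergent normalizations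
with the orthogonal, characterized as the dual pairs of paths. -/
def VisitableSet (ξ : Address) (pos : Bool) (S : Set (Set (List Action)))
    (p : List Action) : Prop :=
  ∃ D ∈ S, ∃ E ∈ orthSet ξ pos S,
    PathOf (simpleBase ξ pos) D p ∧ PathOf (simpleBase ξ !pos) E (dualSeq p)

def Visitable {ξ : Address} {pos : Bool} (A : Behaviour ξ pos)
    (p : List Action) : Prop :=
  VisitableSet ξ pos A.designs p

/-- Material (incarnated) design of a behaviour: inclusion-minimal. -/
def Material {ξ : Address} {pos : Bool} (A : Behaviour ξ pos)
    (D : Set (List Action)) : Prop :=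
  D ∈ A.designs ∧ ∀ E ∈ A.designs, E ⊆ D → E = D

/-- Completion of a design: add daimon-ended chronicles after every missing
negative action. -/
def completion (β : Base) (D : Set (List Action)) : Set (List Action) :=
  D ∪ {c' | ∃ c ∈ D, ∃ ξ I,
    (c' = c ++ [Action.proper false ξ I] ∨
      c' = c ++ [Action.proper false ξ I, Action.daimon]) ∧
    IsChronicle β (c ++ [Action.proper false ξ I, Action.daimon]) ∧
    c ++ [Action.proper false ξ I] ∉ D}

def DaiDesign : Set (List Action) := {[Action.daimon]}

def firstAction (D : Set (List Action)) (κ : Action) : Prop :=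
  ∃ c ∈ D, c.head? = some κ

/-- Directory of a set of positive designs on `⊢ ξ`. -/
def directory (ξ : Address) (A : Set (Set (List Action))) : Set (Finset ℕ) :=
  {I | ∃ D ∈ A, firstAction D (Action.proper true ξ I)}

/-- Alien positive behaviours: ramifications of first actions pairwise disjoint. -/
def Alien (ξ : Address) (A B : Behaviour ξ true) : Prop :=
  ∀ I ∈ directory ξ A.designs, ∀ J ∈ directory ξ B.designs, Disjoint I J

/-- Extension of the first action of a design by a set `J`. -/
def extDesign (ξ : Address) (J : Finset ℕ) (D : Set (List Action)) :
    Set (List Action) :=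
  {c | ∃ I t, (Action.proper true ξ I :: t) ∈ D ∧
      c = Action.proper true ξ (I ∪ J) :: t}

/-- The extension `A_[B]` of a set of designs along another. -/
def extended (ξ : Address) (A B : Set (Set (List Action))) :
    Set (Set (List Action)) :=
  insert DaiDesign
    {D' | ∃ D ∈ A, (∃ I, firstAction D (Action.proper true ξ I)) ∧
      ∃ E ∈ B, ∃ J, firstAction E (Action.proper true ξ J) ∧
        D' = extDesign ξ J D}

/-- The extension `P_[Q]` of a set of paths along another. -/
def extPaths (ξ : Address) (P Q : Set (List Action)) : Set (List Action) :=
  insert [Action.daimon]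
    {p | ∃ I t, (Action.proper true ξ I :: t) ∈ P ∧
      ∃ q ∈ Q, ∃ J, q.head? = some (Action.proper true ξ J) ∧
        p = Action.proper true ξ (I ∪ J) :: t}

/-- Prefixing a (negative) design by the positive action `(+, ξ, {i})`. -/
def shiftD (ξ : Address) (i : ℕ) (D : Set (List Action)) : Set (List Action) :=
  insert [Action.proper true ξ {i}]
    {c | ∃ d ∈ D, c = Action.proper true ξ {i} :: d}

/-- `C = ↑N` : the positive shift of the negative behaviour `N`. -/
def IsShiftOf (ξ : Address) (i : ℕ) (C : Behaviour ξ true)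
    (N : Behaviour (ξ ++ [i]) false) : Prop :=
  C.designs = biorth ξ true (shiftD ξ i '' N.designs)

/-- `C = ⊕ₖ F k`. -/
def IsSumOf {ξ : Address} {ι : Type} (C : Behaviour ξ true)
    (F : ι → Behaviour ξ true) : Prop :=
  C.designs = biorth ξ true (⋃ k, (F k).designs)

/-- Pairwise disjoint family of positive behaviours (disjoint directories). -/
def PairwiseDisjointFam {ξ : Address} {ι : Type}
    (F : ι → Behaviour ξ true) : Prop :=
  ∀ k l, k ≠ l → ∀ I ∈ directory ξ (F k).designs,
    I ∉ directory ξ (F l).designs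

open Classical in
/-- Tensor of two positive designs on `⊢ ξ`. -/
noncomputable def tensorD (ξ : Address) (D E : Set (List Action)) :
    Set (List Action) :=
  if D = DaiDesign ∨ E = DaiDesign then DaiDesign
  else {c | ∃ I J, firstAction D (Action.proper true ξ I) ∧
      firstAction E (Action.proper true ξ J) ∧
      ∃ t, ((Action.proper true ξ I :: t) ∈ D ∨
            (Action.proper true ξ J :: t) ∈ E) ∧
        c = Action.proper true ξ (I ∪ J) :: t}

/-- `C = A ⊗ B`. -/
def IsTensorOf {ξ : Address} (C A B : Behaviour ξ true) : Prop :=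
  C.designs = biorth ξ true
    {G | ∃ D ∈ A.designs, ∃ E ∈ B.designs, G = tensorD ξ D E}

/-- Hereditary chains of justifiers inside a sequence `p`. -/
inductive JustChain (β : Base) (p : List Action) : List Action → Prop where
  | init {κ} : κ ∈ p → Initial β κ → JustChain β p [κ]
  | cons {s κ κ'} : JustChain β p (s ++ [κ]) → κ' ∈ p → κ.justifies κ' →
      JustChain β p (s ++ [κ, κ'])

/-- Trivial chronicle for a behaviour: hereditary-justifier sequence of an
action of a chronicle of a material design. -/
def TrivialChronicle {ξ : Address} {pos : Bool} (A : Behaviour ξ pos)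
    (s : List Action) : Prop :=
  ∃ D, Material A D ∧ ∃ c ∈ D, JustChain (simpleBase ξ pos) c s

/-- Regular path for a behaviour: reversible path whose justifier chains are
trivial chronicles for the behaviour. -/
def RegularPath {ξ : Address} {pos : Bool} (A : Behaviour ξ pos)
    (p : List Action) : Prop :=
  IsPath (simpleBase ξ pos) p ∧ IsPath (simpleBase ξ !pos) (dualSeq p) ∧
  ∀ κ ∈ p, κ ≠ Action.daimon →
    ∃ s, JustChain (simpleBase ξ pos) p s ∧ s.getLast? = some κ ∧
      TrivialChronicle A s

/-- Regular behaviour: every regular path is visitable. -/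
def Regular {ξ : Address} {pos : Bool} (A : Behaviour ξ pos) : Prop :=
  ∀ p, RegularPath A p → Visitable A p

/-- Proper actions occurring in a design. -/
def properActs (D : Set (List Action)) : Set Action :=
  {a | a ≠ Action.daimon ∧ ∃ c ∈ D, a ∈ c}

/-- Essentially finite behaviour: finitely many material designs, all finite. -/
def EssFinite {ξ : Address} {pos : Bool} (A : Behaviour ξ pos) : Prop :=
  {D | Material A D}.Finite ∧ ∀ D, Material A D → (properActs D).Finite

/-- A slice of a design. -/
def IsSlice (D S : Set (List Action)) : Prop :=
  S ⊆ D ∧ (∀ c ∈ S, ∀ d, d <+: c → d ≠ [] → d ∈ S) ∧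
  ∀ w ξ I₁ I₂, w ++ [Action.proper false ξ I₁] ∈ S →
    w ++ [Action.proper false ξ I₂] ∈ S → I₁ = I₂

/-- Uniformly bounded behaviour: slice sizes of material designs uniformly
bounded. -/
def UnifBounded {ξ : Address} {pos : Bool} (A : Behaviour ξ pos) : Prop :=
  ∃ N : ℕ, ∀ D, Material A D → ∀ S, IsSlice D S →
    (properActs S).Finite ∧ (properActs S).ncard < N

def oneDesign (ξ : Address) : Set (List Action) :=
  {[Action.proper true ξ ∅]}

mutual
  /-- The class `C∞⁺` of positive behaviours: `0`, `1`, or a (possibly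
  infinite) nonempty sum of finite tensors of shifts of `C∞⁻` elements. -/
  inductive CInf : (ξ : Address) → Behaviour ξ true → Prop where
    | zero {ξ} (A : Behaviour ξ true) :
        A.designs = {DaiDesign} → CInf ξ A
    | one {ξ} (A : Behaviour ξ true) :
        A.designs = biorth ξ true {oneDesign ξ} → CInf ξ A
    | sum {ξ} {ι : Type} (F : ι → Behaviour ξ true) (C : Behaviour ξ true) :
        Nonempty ι → (∀ k, CInfTS ξ (F k)) → PairwiseDisjointFam F →
        IsSumOf C F → CInf ξ C
  /-- Finite tensors of positive shifts of duals of `C∞⁺` elements. -/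
  inductive CInfTS : (ξ : Address) → Behaviour ξ true → Prop where
    | shift {ξ} {i : ℕ} (C : Behaviour ξ true) (N : Behaviour (ξ ++ [i]) false)
        (P : Behaviour (ξ ++ [i]) true) :
        CInf (ξ ++ [i]) P → N.designs = orthSet (ξ ++ [i]) true P.designs →
        IsShiftOf ξ i C N → CInfTS ξ C
    | tensor {ξ} (A B C : Behaviour ξ true) :
        CInfTS ξ A → CInfTS ξ B → Alien ξ A B → IsTensorOf C A B →
        CInfTS ξ C
end

mutual
  /-- The class `C_f⁺`: as `C∞⁺` but with finite sums only. -/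
  inductive CFin : (ξ : Address) → Behaviour ξ true → Prop where
    | zero {ξ} (A : Behaviour ξ true) :
        A.designs = {DaiDesign} → CFin ξ A
    | one {ξ} (A : Behaviour ξ true) :
        A.designs = biorth ξ true {oneDesign ξ} → CFin ξ A
    | sum {ξ} {ι : Type} (F : ι → Behaviour ξ true) (C : Behaviour ξ true) :
        Nonempty ι → Finite ι → (∀ k, CFinTS ξ (F k)) → PairwiseDisjointFam F →
        IsSumOf C F → CFin ξ C
  inductive CFinTS : (ξ : Address) → Behaviour ξ true → Prop where
    | shift {ξ} {i : ℕ} (C : Behaviour ξ true) (N : Behaviour (ξ ++ [i]) false)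
        (P : Behaviour (ξ ++ [i]) true) :
        CFin (ξ ++ [i]) P → N.designs = orthSet (ξ ++ [i]) true P.designs →
        IsShiftOf ξ i C N → CFinTS ξ C
    | tensor {ξ} (A B C : Behaviour ξ true) :
        CFinTS ξ A → CFinTS ξ B → Alien ξ A B → IsTensorOf C A B →
        CFinTS ξ C
end

/-- The class `C∞⁻` : duals of `C∞⁺` elements. -/
def CInfN (ξ : Address) (B : Behaviour ξ false) : Prop :=
  ∃ A : Behaviour ξ true, CInf ξ A ∧ B.designs = orthSet ξ true A.designs

def CFinN (ξ : Address) (B : Behaviour ξ false) : Prop :=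
  ∃ A : Behaviour ξ true, CFin ξ A ∧ B.designs = orthSet ξ true A.designs

end Ludics

/-!
By internal completeness, `⊕ₖ Aₖ` has exactly the designs of the `Aₖ`. Let `D` be a design of the
sum with first action `(+, ξ, I)`. The counter-design answering the first actions of all summands by
the daimon, and nothing else, lies in `(⋃ₖ Aₖ)⊥`, so `I` is in the directory of some `Aₖ`, unique by
disjointness. Any `E ∈ Aₖ⊥`, modified to answer the first actions of the other summands by the
daimon, also lies in `(⋃ₖ Aₖ)⊥`; `D` converges against it, hence against `E`, since the two differ
only on chronicles starting with ramifications other than `I`. So `D ∈ Aₖ`.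

Hence a path visitable in the sum is visitable in some `Aₖ`, with the same counter-design since
`(⊕ₖ Aₖ)⊥ ⊆ Aₖ⊥`. Conversely, a path visited by `D ∈ Aₖ` and `E ∈ Aₖ⊥` is also visited by `D` and
the modified `E`, which lies in `(⊕ₖ Aₖ)⊥`: the only ramification the path uses at `ξ` is that of
`D`, where the modification changes nothing.
-/

namespace List

theorem eq_or_eq_of_prefix_pair {α : Type*} {c : List α} {x y : α} (h : c <+: [x, y]) :
    c = [] ∨ c = [x] ∨ c = [x, y] := by
  simp only [prefix_cons_iff, prefix_nil] at h
  aesop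

theorem eq_of_snoc_prefix_pair {α : Type*} {w : List α} {a x y : α}
    (h : w ++ [a] <+: [x, y]) : (w = [] ∧ a = x) ∨ (w = [x] ∧ a = y) := by
  rcases eq_or_eq_of_prefix_pair h with h | h | h
  · simp at h
  · obtain ⟨rfl, h⟩ := append_inj' (h.trans (nil_append [x]).symm) rfl
    simp_all
  · obtain ⟨rfl, h⟩ := append_inj' (h.trans (singleton_append (l := [y])).symm) rfl
    simp_all

theorem eq_of_snoc_prefix_snoc_prefix {α : Type*} {w l : List α} {a b : α}
    (ha : w ++ [a] <+: l) (hb : w ++ [b] <+: l) : a = b := by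
  rw [prefix_iff_eq_take] at ha hb
  simp only [length_append, length_singleton] at ha hb
  simpa using ha.trans hb.symm

theorem snoc_prefix_of_append_cons_prefix {α : Type*} {w u l : List α} {a : α}
    (h : w ++ a :: u <+: l) : w ++ [a] <+: l :=
  (prefix_append (w ++ [a]) u).trans (by simpa using h)

theorem head?_eq_of_prefix {α : Type*} {l₁ l₂ : List α} (h : l₁ <+: l₂) (hne : l₁ ≠ []) :
    l₂.head? = l₁.head? := by
  obtain ⟨r, rfl⟩ := h
  exact head?_append_of_ne_nil _ hne

end List

namespace Ludics

namespace Action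

theorem dual_eq_proper_iff {a : Action} {pos : Bool} {ξ : Address} {I : Finset ℕ} :
    a.dual = proper pos ξ I ↔ a = proper (!pos) ξ I := by
  cases a <;> simp [dual]

end Action

theorem proper_mem_of_mem_map_dual {u : List Action} {ξ : Address} {J : Finset ℕ}
    (h : Action.proper false ξ J ∈ u.map Action.dual ++ [Action.daimon]) :
    Action.proper true ξ J ∈ u := by
  simpa [Action.dual_eq_proper_iff] using h

theorem dualSeq_subset (p : List Action) : dualSeq p ⊆ p.map Action.dual ++ [Action.daimon] := by
  unfold dualSeq
  split
  · exact List.Subset.trans ((List.dropLast_sublist p).map _).subset (List.subset_append_left _ _)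
  · exact List.Subset.refl _

theorem viewRevAux_subset : ∀ (n : ℕ) (s : List Action), viewRevAux n s ⊆ s
  | 0, _ => by simp [viewRevAux]
  | _ + 1, [] => by simp [viewRevAux]
  | n + 1, a :: w => by
    rw [viewRevAux]
    split
    · exact List.cons_subset_cons a (viewRevAux_subset n w)
    · exact List.cons_subset_cons a
        (List.Subset.trans (viewRevAux_subset n _) (List.dropWhile_sublist _).subset)

theorem view_subset (s : List Action) : view s ⊆ s := fun a ha => by
  simpa using viewRevAux_subset _ _ (List.mem_reverse.1 ha)

theorem view_singleton (a : Action) : view [a] = [a] := by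
  unfold view viewRev
  simp only [List.reverse_singleton, List.length_singleton]
  rw [viewRevAux]
  split <;> simp [viewRevAux]

theorem view_append_pos (w : List Action) {a : Action} (h : a.isPositive = true) :
    view (w ++ [a]) = view w ++ [a] := by
  unfold view viewRev
  simp only [List.reverse_append, List.reverse_singleton, List.singleton_append,
    List.length_cons]
  rw [viewRevAux]
  simp [h]

theorem isPositive_simpleBase_true (ξ : Address) : (simpleBase ξ true).isPositive :=
  ⟨⟨none, {ξ}⟩, by simp [simpleBase], rfl⟩

theorem not_isPositive_simpleBase_false (ξ : Address) : ¬ (simpleBase ξ false).isPositive := by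
  simp [Base.isPositive, simpleBase]

theorem initial_simpleBase_iff {ξ : Address} {pos : Bool} {a : Action} :
    Initial (simpleBase ξ pos) a ↔ ∃ I, a = .proper pos ξ I := by
  cases pos <;> simp [Initial, simpleBase]

namespace IsPath

variable {β : Base} {ξ : Address} {p : List Action}

theorem of_prefix (hp : IsPath β p) {q : List Action} (hq : q <+: p) (hne : q ≠ []) :
    IsPath β q where
  alternating := hp.alternating.prefix hq
  justified w a h := hp.justified w a (h.trans hq)
  negJump w a b h := hp.negJump w a b (h.trans hq)
  posJump w a h := hp.posJump w a (h.trans hq)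
  linearity := hp.linearity.sublist (hq.sublist.filterMap _)
  daimonLast w h := by
    have hp' := hp.daimonLast w (h.trans hq)
    rw [← hp'] at hq
    exact h.eq_of_length (le_antisymm h.length_le hq.length_le)
  daimonFirst h := hp.daimonFirst (by rwa [List.head?_eq_of_prefix hq hne])
  totality hβ := by
    obtain ⟨a, t, rfl, ha⟩ := hp.totality hβ
    obtain ⟨b, u, rfl⟩ := List.exists_cons_of_ne_nil hne
    obtain rfl : a = b := by simpa using List.head?_eq_of_prefix hq hne
    exact ⟨a, u, rfl, ha⟩

theorem exists_cons_simpleBase_true (hp : IsPath (simpleBase ξ true) p) :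
    ∃ a t, p = a :: t ∧ (a = .daimon ∨ ∃ I, a = .proper true ξ I) := by
  obtain ⟨a, t, rfl, ha⟩ := hp.totality (isPositive_simpleBase_true ξ)
  exact ⟨a, t, rfl, ha.imp_right fun h => initial_simpleBase_iff.1 h.2⟩

theorem head?_simpleBase_false (hp : IsPath (simpleBase ξ false) p) (hne : p ≠ []) :
    ∃ I, p.head? = some (.proper false ξ I) := by
  obtain ⟨a, t, rfl⟩ := List.exists_cons_of_ne_nil hne
  have ha : a ≠ .daimon := fun h =>
    not_isPositive_simpleBase_false ξ (hp.daimonFirst (by simp [h]))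
  rcases hp.justified [] a ⟨t, rfl⟩ ha with h | ⟨b, hb, -⟩
  · obtain ⟨I, rfl⟩ := initial_simpleBase_iff.1 h
    exact ⟨I, rfl⟩
  · simp at hb

theorem head?_eq_of_mem (hp : IsPath (simpleBase ξ true) p) {K : Finset ℕ}
    (hK : Action.proper true ξ K ∈ p) : p.head? = some (.proper true ξ K) := by
  obtain ⟨a, t, rfl, rfl | ⟨I, rfl⟩⟩ := hp.exists_cons_simpleBase_true
  · obtain rfl : t = [] := by simpa using hp.daimonLast [] ⟨t, rfl⟩
    simp at hK
  · rcases List.mem_cons.1 hK with h | h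
    · rw [h]; rfl
    · have := hp.linearity
      simp only [List.filterMap_cons, Action.focus?, List.nodup_cons] at this
      exact (this.1 (List.mem_filterMap.2 ⟨_, h, rfl⟩)).elim

end IsPath

theorem IsChronicle.of_prefix {β : Base} {c q : List Action} (hc : IsChronicle β c)
    (hq : q <+: c) (hne : q ≠ []) : IsChronicle β q :=
  ⟨hc.1.of_prefix hq hne, hne, fun w a b h => hc.2.2 w a b (h.trans hq)⟩

theorem isPath_negDaimon (ξ : Address) (J : Finset ℕ) :
    IsPath (simpleBase ξ false) [.proper false ξ J, .daimon] where
  alternating := List.IsChain.cons_cons (by simp [Action.isPositive]) (List.IsChain.singleton _)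
  justified w a h ha := by
    rcases List.eq_of_snoc_prefix_pair h with ⟨-, rfl⟩ | ⟨-, rfl⟩
    · exact Or.inl (initial_simpleBase_iff.2 ⟨J, rfl⟩)
    · exact absurd rfl ha
  negJump w a b h _ hb hj := by
    rcases List.eq_of_snoc_prefix_pair h with ⟨rfl, -⟩ | ⟨rfl, rfl⟩
    · simp at hb
    · simp only [List.mem_singleton] at hb
      subst hb
      simp [Action.justifies, Action.justifiesB] at hj
  posJump w a h ha had := by
    rcases List.eq_of_snoc_prefix_pair h with ⟨-, rfl⟩ | ⟨-, rfl⟩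
    · simp [Action.isPositive] at ha
    · exact absurd rfl had
  linearity := by simp [Action.focus?, List.filterMap_cons]
  daimonLast w h := by
    rcases List.eq_of_snoc_prefix_pair h with ⟨-, h⟩ | ⟨rfl, -⟩
    · simp at h
    · rfl
  daimonFirst h := by simp at h
  totality h := absurd h (not_isPositive_simpleBase_false ξ)

theorem isChronicle_negDaimon (ξ : Address) (J : Finset ℕ) :
    IsChronicle (simpleBase ξ false) [.proper false ξ J, .daimon] := by
  refine ⟨isPath_negDaimon ξ J, by simp, fun w a b h hb => ?_⟩
  have h' : (w ++ [a]) ++ [b] <+: [.proper false ξ J, .daimon] := by simpa using h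
  rcases List.eq_of_snoc_prefix_pair h' with ⟨h, -⟩ | ⟨-, rfl⟩
  · simp at h
  · simp [Action.isPositive] at hb

theorem coherent_of_prefix {c d l : List Action} (hc : c <+: l) (hd : d <+: l) :
    Coherent c d := by
  refine ⟨fun w κ₁ κ₂ h₁ h₂ =>
    Or.inl (List.eq_of_snoc_prefix_snoc_prefix (h₁.trans hc) (h₂.trans hd)), ?_⟩
  intro w ξ₁ I₁ w₁ σ₁ ξ₂ I₂ w₂ σ₂ h₁ h₂ hξ
  have e := List.eq_of_snoc_prefix_snoc_prefix
    (List.snoc_prefix_of_append_cons_prefix (by simpa using h₁.trans hc))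
    (List.snoc_prefix_of_append_cons_prefix (by simpa using h₂.trans hd))
  simp only [Action.proper.injEq] at e
  exact (hξ e.2.1).elim

theorem coherent_of_head?_ne {ξ : Address} {c d : List Action}
    (hc : ∃ I, c.head? = some (.proper false ξ I)) (hd : ∃ I, d.head? = some (.proper false ξ I))
    (hne : c.head? ≠ d.head?) : Coherent c d := by
  obtain ⟨I₁, hI₁⟩ := hc
  obtain ⟨I₂, hI₂⟩ := hd
  have first : ∀ {w a b}, w ++ [a] <+: c → w ++ [b] <+: d →
      a = .proper false ξ I₁ ∧ b = .proper false ξ I₂ := by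
    intro w a b ha hb
    have hc' := List.head?_eq_of_prefix ha (by simp)
    have hd' := List.head?_eq_of_prefix hb (by simp)
    cases w with
    | nil => simp_all
    | cons x w => exact absurd (hc'.trans hd'.symm) hne
  refine ⟨fun w κ₁ κ₂ h₁ h₂ => ?_, fun w ξ₁ J₁ w₁ σ₁ ξ₂ J₂ w₂ σ₂ h₁ h₂ hξ => ?_⟩
  · obtain ⟨rfl, rfl⟩ := first h₁ h₂
    exact Or.inr ⟨rfl, rfl⟩
  · obtain ⟨h₁', h₂'⟩ := first (List.snoc_prefix_of_append_cons_prefix (by simpa using h₁))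
      (List.snoc_prefix_of_append_cons_prefix (by simpa using h₂))
    simp only [Action.proper.injEq] at h₁' h₂'
    exact (hξ (h₁'.2.1.trans h₂'.2.1.symm)).elim

namespace IsDesign

variable {ξ : Address} {D : Set (List Action)}

theorem head?_simpleBase_false (hD : IsDesign (simpleBase ξ false) D) {c : List Action}
    (hc : c ∈ D) : ∃ I, c.head? = some (.proper false ξ I) :=
  (hD.chron c hc).1.head?_simpleBase_false (hD.chron c hc).2.1

theorem exists_singleton_mem (hD : IsDesign (simpleBase ξ true) D) :
    ∃ a, [a] ∈ D ∧ (a = .daimon ∨ ∃ I, a = .proper true ξ I) := by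
  obtain ⟨c, hc⟩ := hD.posNonempty (isPositive_simpleBase_true ξ)
  obtain ⟨a, t, rfl, ha⟩ := (hD.chron c hc).1.exists_cons_simpleBase_true
  exact ⟨a, hD.prefixClosed _ hc [a] ⟨t, rfl⟩ (by simp), ha⟩

theorem head?_eq_of_singleton_mem (hD : IsDesign (simpleBase ξ true) D) {a : Action}
    (ha : [a] ∈ D) {c : List Action} (hc : c ∈ D) : c.head? = some a := by
  obtain ⟨b, t, rfl, hb⟩ := (hD.chron c hc).1.exists_cons_simpleBase_true
  have hbpos : b.isPositive = true := by rcases hb with rfl | ⟨I, rfl⟩ <;> rfl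
  rcases (hD.coherent _ hc _ ha).1 [] b a ⟨t, rfl⟩ (List.prefix_refl _) with rfl | ⟨h, -⟩
  · rfl
  · simp [hbpos] at h

theorem ram_eq_of_mem (hD : IsDesign (simpleBase ξ true) D) {I : Finset ℕ}
    (hI : [.proper true ξ I] ∈ D) : ∀ c ∈ D, ∀ K, .proper true ξ K ∈ c → K = I := by
  intro c hc K hK
  simpa using ((hD.chron c hc).1.head?_eq_of_mem hK).symm.trans
    (hD.head?_eq_of_singleton_mem hI hc)

end IsDesign

theorem isDesign_empty (ξ : Address) : IsDesign (simpleBase ξ false) ∅ where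
  chron _ h := h.elim
  prefixClosed _ h := h.elim
  coherent _ h := h.elim
  maxPos _ h := h.elim
  posNonempty h := absurd h (not_isPositive_simpleBase_false ξ)

def headPiecewise (T : Set (Option Action)) (E₁ E₂ : Set (List Action)) : Set (List Action) :=
  {c ∈ E₁ | c.head? ∈ T} ∪ {c ∈ E₂ | c.head? ∉ T}

theorem isDesign_headPiecewise {ξ : Address} {T : Set (Option Action)}
    {E₁ E₂ : Set (List Action)} (h₁ : IsDesign (simpleBase ξ false) E₁)
    (h₂ : IsDesign (simpleBase ξ false) E₂) :
    IsDesign (simpleBase ξ false) (headPiecewise T E₁ E₂) where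
  chron := by
    rintro c (⟨hc, -⟩ | ⟨hc, -⟩)
    exacts [h₁.chron c hc, h₂.chron c hc]
  prefixClosed := by
    rintro c (⟨hc, hT⟩ | ⟨hc, hT⟩) d hd hne <;> rw [List.head?_eq_of_prefix hd hne] at hT
    exacts [Or.inl ⟨h₁.prefixClosed c hc d hd hne, hT⟩,
      Or.inr ⟨h₂.prefixClosed c hc d hd hne, hT⟩]
  coherent := by
    have hhead : ∀ c ∈ headPiecewise T E₁ E₂, ∃ I, c.head? = some (.proper false ξ I) := by
      rintro c (⟨hc, -⟩ | ⟨hc, -⟩)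
      exacts [h₁.head?_simpleBase_false hc, h₂.head?_simpleBase_false hc]
    intro c hc' d hd'
    have hne := coherent_of_head?_ne (hhead c hc') (hhead d hd')
    rcases hc' with ⟨hc, hcT⟩ | ⟨hc, hcT⟩ <;> rcases hd' with ⟨hd, hdT⟩ | ⟨hd, hdT⟩
    · exact h₁.coherent c hc d hd
    · exact hne fun h => hdT (h ▸ hcT)
    · exact hne fun h => hcT (h ▸ hdT)
    · exact h₂.coherent c hc d hd
  maxPos := by
    rintro c (⟨hc, hT⟩ | ⟨hc, hT⟩) hmax
    · refine h₁.maxPos c hc fun κ hκ => hmax κ (Or.inl ⟨hκ, ?_⟩)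
      rwa [List.head?_append_of_ne_nil _ (h₁.chron c hc).2.1]
    · refine h₂.maxPos c hc fun κ hκ => hmax κ (Or.inr ⟨hκ, ?_⟩)
      rwa [List.head?_append_of_ne_nil _ (h₂.chron c hc).2.1]
  posNonempty h := absurd h (not_isPositive_simpleBase_false ξ)

def negDaimon (ξ : Address) : Set (List Action) :=
  {c | c ≠ [] ∧ ∃ J, c <+: [.proper false ξ J, .daimon]}

theorem isDesign_negDaimon (ξ : Address) : IsDesign (simpleBase ξ false) (negDaimon ξ) where
  chron _ := fun ⟨hne, J, hc⟩ => (isChronicle_negDaimon ξ J).of_prefix hc hne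
  prefixClosed _ := fun ⟨_, J, hc⟩ d hd hne => ⟨hne, J, hd.trans hc⟩
  coherent := by
    rintro c ⟨hc, I, hcI⟩ d ⟨hd, J, hdJ⟩
    by_cases hIJ : I = J
    · subst hIJ
      exact coherent_of_prefix hcI hdJ
    · have hc' : c.head? = some (.proper false ξ I) := (List.head?_eq_of_prefix hcI hc).symm
      have hd' : d.head? = some (.proper false ξ J) := (List.head?_eq_of_prefix hdJ hd).symm
      exact coherent_of_head?_ne ⟨I, hc'⟩ ⟨J, hd'⟩ (by simpa [hc', hd'])
  maxPos := by
    rintro c ⟨hne, J, hc⟩ hmax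
    rcases List.eq_or_eq_of_prefix_pair hc with rfl | rfl | rfl
    · exact absurd rfl hne
    · exact absurd ⟨by simp, J, List.prefix_refl _⟩ (hmax .daimon)
    · exact ⟨.daimon, rfl, rfl⟩
  posNonempty h := absurd h (not_isPositive_simpleBase_false ξ)

section Conv

variable {D R : Set (List Action)} {dpos : Prop}

theorem conv_mono {R' : Set (List Action)} {s : List Action} (hR : R ⊆ R')
    (h : Conv D R dpos s) : Conv D R' dpos s := by
  induction h with
  | daiD h₁ h₂ => exact .daiD h₁ h₂
  | daiR h₁ h₂ => exact .daiR h₁ (hR h₂)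
  | stepD h₁ h₂ h₃ h₄ h₅ _ ih => exact .stepD h₁ h₂ h₃ h₄ (hR h₅) ih
  | stepR h₁ h₂ h₃ h₄ _ ih => exact .stepR h₁ h₂ (hR h₃) h₄ ih

theorem conv_of_daimon_mem (hd : dpos) (h : [.daimon] ∈ D) : Conv D R dpos [] :=
  .daiD hd (by rwa [List.nil_append, view_singleton])

theorem not_conv_empty (h : [.daimon] ∉ D) : ¬ Conv D ∅ dpos [] := by
  intro hc
  cases hc with
  | daiD _ h' => exact h (by rwa [List.nil_append, view_singleton] at h')
  | daiR _ h' => exact h'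
  | stepD _ _ _ _ h' _ => exact h'
  | stepR _ _ h' _ _ => exact h'

theorem conv_of_daimon_answer {ξ : Address} {J : Finset ℕ} (hd : dpos)
    (hD : [.proper true ξ J] ∈ D) (h₁ : [.proper false ξ J] ∈ R)
    (h₂ : [.proper false ξ J, .daimon] ∈ R) : Conv D R dpos [] := by
  refine .stepD (κ := .proper true ξ J) hd rfl (by simp)
    (by rwa [List.nil_append, view_singleton]) (by simpa [view_singleton, Action.dual] using h₁)
    (.daiR (by simp [TurnD, Action.isPositive]) ?_)
  rwa [List.nil_append, List.map_singleton, Action.dual, Bool.not_true,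
    view_append_pos _ rfl, view_singleton]

theorem conv_restrict_head {ξ : Address} {I : Finset ℕ}
    (hD : ∀ c ∈ D, ∀ K, .proper true ξ K ∈ c → K = I)
    (hR : ∀ c ∈ R, ∃ J, c.head? = some (.proper false ξ J)) {s : List Action}
    (h : Conv D R dpos s) (hs : ∀ K, .proper true ξ K ∈ s → K = I) :
    Conv D {c ∈ R | c.head? = some (.proper false ξ I)} dpos s := by
  have restrict : ∀ c ∈ R, ∀ u : List Action, c ⊆ u.map Action.dual ++ [.daimon] →
      (∀ K, .proper true ξ K ∈ u → K = I) → c ∈ {c ∈ R | c.head? = some (.proper false ξ I)} := by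
    intro c hc u hcu hu
    obtain ⟨J, hJ⟩ := hR c hc
    obtain rfl := hu J (proper_mem_of_mem_map_dual (hcu (List.mem_of_mem_head? hJ)))
    exact ⟨hc, hJ⟩
  induction h with
  | daiD h₁ h₂ => exact .daiD h₁ h₂
  | daiR h₁ h₂ => exact .daiR h₁ (restrict _ h₂ _ (view_subset _) hs)
  | @stepD s κ h₁ h₂ h₃ h₄ h₅ _ ih =>
    have hs' : ∀ K, .proper true ξ K ∈ s ++ [κ] → K = I := by
      simp only [List.mem_append, List.mem_singleton]
      rintro K (hK | rfl)
      · exact hs K hK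
      · exact hD _ h₄ K (by simp [view_append_pos _ h₂])
    exact .stepD h₁ h₂ h₃ h₄
      (restrict _ h₅ _ (List.Subset.trans (view_subset _) (List.subset_append_left _ _)) hs')
      (ih hs')
  | @stepR s κ h₁ h₂ h₃ h₄ _ ih =>
    have hs' : ∀ K, .proper true ξ K ∈ s ++ [κ] → K = I := by
      simp only [List.mem_append, List.mem_singleton]
      rintro K (hK | rfl)
      · exact hs K hK
      · simp [Action.isPositive] at h₂
    exact .stepR h₁ h₂
      (restrict _ h₃ _ (List.Subset.trans (view_subset _) (List.subset_append_left _ _)) hs')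
      h₄ (ih hs')

end Conv

theorem orthSet_anti {ξ : Address} {pos : Bool} {A A' : Set (Set (List Action))} (h : A ⊆ A') :
    orthSet ξ pos A' ⊆ orthSet ξ pos A :=
  fun _ hE => ⟨hE.1, fun D hD => hE.2 D (h hD)⟩

theorem biorth_mono {ξ : Address} {pos : Bool} {A A' : Set (Set (List Action))} (h : A ⊆ A') :
    biorth ξ pos A ⊆ biorth ξ pos A' :=
  orthSet_anti (orthSet_anti h)

theorem mem_biorth_of_daimon_mem {ξ : Address} {A : Set (Set (List Action))}
    {D : Set (List Action)} (hD : IsDesign (simpleBase ξ true) D) (h : [.daimon] ∈ D) :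
    D ∈ biorth ξ true A :=
  ⟨hD, fun _ _ => conv_of_daimon_mem trivial h⟩

/-- `E`, with each first action `(-, ξ, J)` such that `J ∈ B` answered by the daimon. -/
def daimonOn (ξ : Address) (B : Set (Finset ℕ)) (E : Set (List Action)) : Set (List Action) :=
  headPiecewise ((fun J => some (Action.proper false ξ J)) '' B) (negDaimon ξ) E

section daimonOn

variable {ξ : Address} {B : Set (Finset ℕ)} {D E : Set (List Action)}

theorem isDesign_daimonOn (hE : IsDesign (simpleBase ξ false) E) :
    IsDesign (simpleBase ξ false) (daimonOn ξ B E) :=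
  isDesign_headPiecewise (isDesign_negDaimon ξ) hE

theorem conv_daimonOn_of_mem {J : Finset ℕ} (hD : [.proper true ξ J] ∈ D) (hJ : J ∈ B) :
    Conv D (daimonOn ξ B E) True [] :=
  conv_of_daimon_answer trivial hD (Or.inl ⟨⟨by simp, J, by simp⟩, J, hJ, rfl⟩)
    (Or.inl ⟨⟨by simp, J, List.prefix_refl _⟩, J, hJ, rfl⟩)

theorem conv_daimonOn_iff (hD : IsDesign (simpleBase ξ true) D) {I : Finset ℕ}
    (hI : [.proper true ξ I] ∈ D) (hIB : I ∉ B) (hE : IsDesign (simpleBase ξ false) E) :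
    Conv D (daimonOn ξ B E) True [] ↔ Conv D E True [] := by
  have hT : some (Action.proper false ξ I) ∉ (fun J => some (Action.proper false ξ J)) '' B := by
    rintro ⟨J, hJ, hJI⟩
    simp only [Option.some.injEq, Action.proper.injEq, true_and] at hJI
    exact hIB (hJI ▸ hJ)
  have hram := hD.ram_eq_of_mem hI
  constructor
  · intro h
    refine conv_mono ?_ (conv_restrict_head hram
      (fun c hc => (isDesign_daimonOn hE).head?_simpleBase_false hc) h (by simp))
    rintro c ⟨⟨-, hcT⟩ | ⟨hc, -⟩, hcI⟩
    · exact absurd (hcI ▸ hcT) hT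
    · exact hc
  · intro h
    refine conv_mono ?_ (conv_restrict_head hram (fun c hc => hE.head?_simpleBase_false hc) h
      (by simp))
    rintro c ⟨hc, hcI⟩
    exact Or.inr ⟨hc, hcI ▸ hT⟩

theorem daimonOn_mem_orthSet {A : Set (Set (List Action))}
    (hA : ∀ D ∈ A, IsDesign (simpleBase ξ true) D) (hE : IsDesign (simpleBase ξ false) E)
    (h : ∀ D ∈ A, ∀ J, [.proper true ξ J] ∈ D → J ∉ B → Conv D E True []) :
    daimonOn ξ B E ∈ orthSet ξ true A := by
  refine ⟨isDesign_daimonOn hE, fun D hD => ?_⟩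
  obtain ⟨a, ha, rfl | ⟨J, rfl⟩⟩ := (hA D hD).exists_singleton_mem
  · exact conv_of_daimon_mem trivial ha
  · by_cases hJ : J ∈ B
    · exact conv_daimonOn_of_mem ha hJ
    · exact (conv_daimonOn_iff (hA D hD) ha hJ hE).2 (h D hD J ha hJ)

theorem pathOf_daimonOn {β : Base} {q : List Action} (hq : PathOf β E q)
    (hB : ∀ J ∈ B, .proper false ξ J ∉ q) : PathOf β (daimonOn ξ B E) q := by
  refine ⟨hq.1, fun r hr hne => Or.inr ⟨hq.2 r hr hne, ?_⟩⟩
  rintro ⟨J, hJ, hhead⟩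
  exact hB J hJ (hr.subset (view_subset r (List.mem_of_mem_head? hhead.symm)))

end daimonOn

section Sum

variable {ξ : Address} {ι : Type} {F : ι → Behaviour ξ true}

theorem mem_directory {A : Set (Set (List Action))} {D : Set (List Action)} (hD : D ∈ A)
    {I : Finset ℕ} (hI : [.proper true ξ I] ∈ D) : I ∈ directory ξ A :=
  ⟨D, hD, _, hI, rfl⟩

theorem mem_directory_of_pathOf {A : Set (Set (List Action))} {D : Set (List Action)}
    {p : List Action} (hD : D ∈ A) (hp : PathOf (simpleBase ξ true) D p) {J : Finset ℕ}
    (hJ : .proper true ξ J ∈ p) : J ∈ directory ξ A := by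
  obtain ⟨t, rfl⟩ := List.head?_eq_some_iff.1 (hp.1.head?_eq_of_mem hJ)
  have h := hp.2 [_] ⟨t, rfl⟩ (by simp)
  rw [view_singleton] at h
  exact mem_directory hD h

theorem isDesign_of_mem_iUnion {D : Set (List Action)} (hD : D ∈ ⋃ k, (F k).designs) :
    IsDesign (simpleBase ξ true) D := by
  obtain ⟨k, hk⟩ := Set.mem_iUnion.1 hD
  exact (F k).isDesign D hk

theorem PairwiseDisjointFam.notMem_directory_of_ne (hdisj : PairwiseDisjointFam F) {k : ι}
    {I : Finset ℕ} (hI : I ∈ directory ξ (F k).designs) :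
    I ∉ {J | ∃ l ≠ k, J ∈ directory ξ (F l).designs} :=
  fun ⟨l, hl, hIl⟩ => hdisj k l hl.symm I hI hIl

theorem daimonOn_mem_orthSet_iUnion (k : ι) {E : Set (List Action)}
    (hE : E ∈ orthSet ξ true (F k).designs) :
    daimonOn ξ {J | ∃ l ≠ k, J ∈ directory ξ (F l).designs} E ∈
      orthSet ξ true (⋃ l, (F l).designs) := by
  refine daimonOn_mem_orthSet (fun D => isDesign_of_mem_iUnion) hE.1 fun D hD J hJ hJB => ?_
  obtain ⟨l, hl⟩ := Set.mem_iUnion.1 hD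
  obtain rfl : l = k := by
    by_contra hlk
    exact hJB ⟨l, hlk, mem_directory hl hJ⟩
  exact hE.2 D hl

theorem exists_mem_directory_of_mem_biorth {D : Set (List Action)}
    (hD : D ∈ biorth ξ true (⋃ k, (F k).designs)) {I : Finset ℕ}
    (hI : [.proper true ξ I] ∈ D) : ∃ k, I ∈ directory ξ (F k).designs := by
  by_contra hdir
  have hE : daimonOn ξ {J | ∃ k, J ∈ directory ξ (F k).designs} ∅ ∈
      orthSet ξ true (⋃ k, (F k).designs) :=
    daimonOn_mem_orthSet (fun D => isDesign_of_mem_iUnion) (isDesign_empty ξ)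
      fun D hD J hJ hJB => (hJB (Set.mem_iUnion.1 hD |>.imp fun k hk => mem_directory hk hJ)).elim
  refine not_conv_empty (fun h => ?_) ((conv_daimonOn_iff hD.1 hI hdir (isDesign_empty ξ)).1
    (hD.2 _ hE))
  simpa using hD.1.head?_eq_of_singleton_mem hI h

theorem designs_eq_iUnion_of_isSumOf [Nonempty ι] {C : Behaviour ξ true}
    (hdisj : PairwiseDisjointFam F) (h : IsSumOf C F) : C.designs = ⋃ k, (F k).designs := by
  refine subset_antisymm (fun D hD => ?_) (Set.iUnion_subset fun k => ?_)
  · rw [h] at hD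
    obtain ⟨a, ha, rfl | ⟨I, rfl⟩⟩ := hD.1.exists_singleton_mem
    · obtain ⟨k⟩ := ‹Nonempty ι›
      refine Set.mem_iUnion_of_mem k ?_
      rw [(F k).closed]
      exact mem_biorth_of_daimon_mem hD.1 ha
    · obtain ⟨k, hIk⟩ := exists_mem_directory_of_mem_biorth hD ha
      refine Set.mem_iUnion_of_mem k ?_
      rw [(F k).closed]
      refine ⟨hD.1, fun E hE => ?_⟩
      exact (conv_daimonOn_iff hD.1 ha (hdisj.notMem_directory_of_ne hIk) hE.1).1
        (hD.2 _ (daimonOn_mem_orthSet_iUnion k hE))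
  · rw [h, (F k).closed]
    exact biorth_mono (Set.subset_iUnion (fun l => (F l).designs) k)

end Sum

/-- visitable paths of a sum of a nonempty family of pairwise
disjoint positive behaviours: `V_{⊕ₖ Aₖ} = ⨄ₖ V_{Aₖ}`. -/
theorem visitable_sum (ξ : Address) {ι : Type} [Nonempty ι]
    (F : ι → Behaviour ξ true) (C : Behaviour ξ true)
    (hdisj : PairwiseDisjointFam F) (h : IsSumOf C F) :
    {p | Visitable C p} = ⋃ k, {p | Visitable (F k) p} := by
  have hC := designs_eq_iUnion_of_isSumOf hdisj h
  ext p
  simp only [Set.mem_ofPred_eq, Set.mem_iUnion, Visitable, VisitableSet, hC]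
  constructor
  · rintro ⟨D, ⟨k, hDk⟩, E, hE, hpD, hpE⟩
    exact ⟨k, D, hDk, E, orthSet_anti (Set.subset_iUnion _ k) hE, hpD, hpE⟩
  · rintro ⟨k, D, hDk, E, hE, hpD, hpE⟩
    refine ⟨D, ⟨k, hDk⟩, _, daimonOn_mem_orthSet_iUnion k hE, hpD,
      pathOf_daimonOn hpE fun J hJ hJp => ?_⟩
    have hJp' := proper_mem_of_mem_map_dual (dualSeq_subset p hJp)
    exact hdisj.notMem_directory_of_ne (mem_directory_of_pathOf hDk hpD hJp') hJ

end Ludics
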